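/- Let g be a finite-dimensional real Lie algebra and let r : g* → g be a bijective skew-symmetric solution of the CYBE. Then the assignment n ↦ n ∘ r is a bijection from the set of linear endomorphisms n of g such that (r, n) is an r-n structure onto the set of skew-symmetric solutions r' of the CYBE such that r + r' is also a solution of the CYBE. -/
import Mathlib


noncomputable section

open Module

variable {g : Type*} [LieRing g] [LieAlgebra ℝ g]

/-- The coadjoint operator: `(coad X α) Y = -α ⁅X, Y⁆`. -/
def coad (X : g) : Module.Dual ℝ g →ₗ[ℝ] Module.Dual ℝ g :=
  -(LieAlgebra.ad ℝ g X).dualMap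

/-- A linear map `r : g* → g` is skew-symmetric if `α (r β) = -β (r α)`. -/
def IsSkew (r : Module.Dual ℝ g →ₗ[ℝ] g) : Prop :=
  ∀ α β : Module.Dual ℝ g, α (r β) = -β (r α)

/-- The Sklyanin bracket on `g*` defined by `r`. -/
def sklyanin (r : Module.Dual ℝ g →ₗ[ℝ] g) (α β : Module.Dual ℝ g) : Module.Dual ℝ g :=
  coad (r α) β - coad (r β) α

/-- `r` is a solution of the classical Yang-Baxter equation. -/
def IsCYBE (r : Module.Dual ℝ g →ₗ[ℝ] g) : Prop :=
  ∀ α β : Module.Dual ℝ g, r (sklyanin r α β) = ⁅r α, r β⁆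

/-- `n : g → g` is a Nijenhuis operator. -/
def IsNijenhuis (n : g →ₗ[ℝ] g) : Prop :=
  ∀ X Y : g, ⁅n X, n Y⁆ - n ⁅n X, Y⁆ - n ⁅X, n Y⁆ + n (n ⁅X, Y⁆) = 0

/-- `(r, n)` is an r-n structure on `g`. -/
def IsRN (r : Module.Dual ℝ g →ₗ[ℝ] g) (n : g →ₗ[ℝ] g) : Prop :=
  IsSkew r ∧ IsCYBE r ∧ IsNijenhuis n ∧
    (∀ α : Module.Dual ℝ g, n (r α) = r (n.dualMap α)) ∧
    ∀ α β : Module.Dual ℝ g,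
      coad (r α) (n.dualMap β) - coad (r β) (n.dualMap α)
        - n.dualMap (coad (r α) β) + n.dualMap (coad (r β) α) = 0

/-- The Nijenhuis concomitant of two endomorphisms. -/
def nijConcomitant (n' n : g →ₗ[ℝ] g) (X Y : g) : g :=
  ⁅n' X, n Y⁆ + ⁅n X, n' Y⁆ - n' ⁅n X, Y⁆ - n' ⁅X, n Y⁆ - n ⁅n' X, Y⁆ - n ⁅X, n' Y⁆
    + n' (n ⁅X, Y⁆) + n (n' ⁅X, Y⁆)

section AuxLemmas
variable {g : Type*} [LieRing g] [LieAlgebra ℝ g]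

lemma coad_apply (X : g) (α : Module.Dual ℝ g) (Y : g) : coad X α Y = -α ⁅X, Y⁆ := rfl

lemma sklyanin_add (r r' : Module.Dual ℝ g →ₗ[ℝ] g) (α β : Module.Dual ℝ g) :
    sklyanin (r + r') α β = sklyanin r α β + sklyanin r' α β := by
  ext Y
  simp [sklyanin, coad_apply, add_lie]
  ring

/-- The (dual) concomitant of `r` and `n`. -/
def conc (r : Module.Dual ℝ g →ₗ[ℝ] g) (n : g →ₗ[ℝ] g) (α β : Module.Dual ℝ g) :
    Module.Dual ℝ g :=
  coad (r α) (n.dualMap β) - coad (r β) (n.dualMap α)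
    - n.dualMap (coad (r α) β) + n.dualMap (coad (r β) α)

lemma key (r : Module.Dual ℝ g →ₗ[ℝ] g) (hcybe : IsCYBE r) (n : g →ₗ[ℝ] g)
    (hcompat : ∀ α, n (r α) = r (n.dualMap α)) (α β : Module.Dual ℝ g) :
    r (sklyanin (n ∘ₗ r) α β)
      = ⁅n (r α), r β⁆ + ⁅r α, n (r β)⁆ - n ⁅r α, r β⁆ - r (conc r n α β) := by
  have h1 : ∀ γ δ : Module.Dual ℝ g, r (coad (r γ) δ) = ⁅r γ, r δ⁆ + r (coad (r δ) γ) := by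
    intro γ δ
    have h := hcybe γ δ
    rw [sklyanin, map_sub, sub_eq_iff_eq_add] at h
    exact h
  have hn : n ⁅r α, r β⁆ = r (n.dualMap (coad (r α) β)) - r (n.dualMap (coad (r β) α)) := by
    rw [← hcybe α β, sklyanin, hcompat, map_sub, map_sub]
  have hs : sklyanin (n ∘ₗ r) α β = coad (r (n.dualMap α)) β - coad (r (n.dualMap β)) α := by
    rw [sklyanin]; simp only [LinearMap.comp_apply, hcompat]
  rw [hs, map_sub, h1 (n.dualMap α) β, h1 (n.dualMap β) α, hn, hcompat α, hcompat β, conc]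
  simp only [map_add, map_sub]
  rw [← lie_skew (r α) (r (n.dualMap β))]
  abel

end AuxLemmas

/-- For a bijective skew-symmetric solution `r` of the CYBE, the assignment
`n ↦ n ∘ r` is a bijection from the set of endomorphisms `n` such that `(r, n)` is an
r-n structure onto the set of skew-symmetric solutions `r'` of the CYBE such that
`r + r'` is also a solution of the CYBE. -/
theorem bijOn_comp
    {g : Type*} [LieRing g] [LieAlgebra ℝ g] [FiniteDimensional ℝ g]
    (r : Module.Dual ℝ g →ₗ[ℝ] g)
    (hskew : IsSkew r) (hcybe : IsCYBE r) (hbij : Function.Bijective r) :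
    Set.BijOn (fun n : g →ₗ[ℝ] g => n ∘ₗ r)
      {n : g →ₗ[ℝ] g | IsRN r n}
      {r' : Module.Dual ℝ g →ₗ[ℝ] g | IsSkew r' ∧ IsCYBE r' ∧ IsCYBE (r + r')} := by
  refine ⟨?_, ?_, ?_⟩
  · -- MapsTo
    intro n hn
    obtain ⟨-, -, hnij, hcompat, hconc⟩ := hn
    have hkey' : ∀ α β, r (sklyanin (n ∘ₗ r) α β)
        = ⁅n (r α), r β⁆ + ⁅r α, n (r β)⁆ - n ⁅r α, r β⁆ := by
      intro α β
      rw [key r hcybe n hcompat α β, show conc r n α β = 0 from hconc α β, map_zero, sub_zero]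
    have hc' : IsCYBE (n ∘ₗ r) := by
      intro α β
      show n (r (sklyanin (n ∘ₗ r) α β)) = _
      rw [hkey' α β]
      simp only [map_add, map_sub, LinearMap.comp_apply]
      linear_combination (norm := module) - hnij (r α) (r β)
    refine ⟨?_, hc', ?_⟩
    · intro α β
      show α (n (r β)) = -β (n (r α))
      rw [hcompat β, hskew α (n.dualMap β)]
      rfl
    · intro α β
      rw [sklyanin_add]
      simp only [map_add, LinearMap.add_apply, LinearMap.comp_apply]
      rw [hcybe α β, hkey' α β]
      simp only [map_add, map_sub, lie_add, add_lie]
      linear_combination (norm := module) - hnij (r α) (r β)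
  · -- InjOn
    intro n1 _ n2 _ h
    ext X
    obtain ⟨α, rfl⟩ := hbij.surjective X
    exact DFunLike.congr_fun h α
  · -- SurjOn
    rintro r' ⟨hs', hc', hmix⟩
    set e := LinearEquiv.ofBijective r hbij with he
    set n : g →ₗ[ℝ] g := r' ∘ₗ e.symm.toLinearMap with hndef
    have hnr : ∀ α, n (r α) = r' α := by
      intro α
      show r' (e.symm (r α)) = r' α
      rw [show r α = e α from rfl, e.symm_apply_apply]
    have hcomp : n ∘ₗ r = r' := LinearMap.ext hnr
    have hcompat : ∀ α, n (r α) = r (n.dualMap α) := by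
      intro α
      rw [hnr α]
      have h0 : ∀ β : Module.Dual ℝ g, β (r (n.dualMap α) - r' α) = 0 := by
        intro β
        have h1 : β (r (n.dualMap α)) = -(n.dualMap α) (r β) := hskew β (n.dualMap α)
        have h2 : (n.dualMap α) (r β) = α (n (r β)) := rfl
        rw [map_sub, h1, h2, hnr β, hs' α β]
        ring
      have h4 := (Module.forall_dual_apply_eq_zero_iff ℝ (r (n.dualMap α) - r' α)).mp h0
      exact (eq_of_sub_eq_zero h4).symm
    have hconc : ∀ α β, conc r n α β = 0 := by
      intro α β
      apply hbij.injective
      rw [map_zero]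
      have hm := hmix α β
      rw [sklyanin_add] at hm
      simp only [map_add, LinearMap.add_apply] at hm
      rw [hcybe α β, hc' α β, ← hcomp] at hm
      simp only [LinearMap.comp_apply] at hm
      rw [hcybe α β, key r hcybe n hcompat α β] at hm
      simp only [add_lie, lie_add, map_add, map_sub] at hm
      linear_combination (norm := module) - hm
    have hnij : IsNijenhuis n := by
      intro X Y
      obtain ⟨α, rfl⟩ := hbij.surjective X
      obtain ⟨β, rfl⟩ := hbij.surjective Y
      have h := hc' α β
      rw [← hcomp] at h
      simp only [LinearMap.comp_apply] at h
      rw [key r hcybe n hcompat α β, hconc α β, map_zero, sub_zero] at h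
      simp only [map_add, map_sub] at h
      linear_combination (norm := module) - h
    exact ⟨n, ⟨hskew, hcybe, hnij, hcompat, fun α β => hconc α β⟩, hcomp⟩
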